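/- arXiv:1401.0849 — 4 statements merged into one kernel-verified Lean document; each statement's English description precedes it below -/
import Mathlib

section
/- Let Φ be a simply-laced root system with roots of length 1, and let α ⊥ β be orthogonal roots. Suppose γ, δ ∈ Φ satisfy γ + δ = α, (γ,β) = 1/2, (δ,β) = −1/2. Then the three roots δ, γ, β−γ form a fundamental system of a root subsystem of Φ of type A₃; in particular β−γ ∈ Φ, (δ,γ) = −1/2, (γ,β−γ) = −1/2, and (δ,β−γ) = 0. -/
open scoped RealInnerProductSpace

/-- A simply-laced root system in a real inner product space,
normalized so that all roots have squared length `1`. -/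
structure SimplyLacedRootSystem (E : Type*) [NormedAddCommGroup E]
    [InnerProductSpace ℝ E] : Type _ where
  Φ : Set E
  finite : Φ.Finite
  zero_not_mem : (0 : E) ∉ Φ
  neg_mem : ∀ α ∈ Φ, -α ∈ Φ
  norm_one : ∀ α ∈ Φ, ⟪α, α⟫ = 1
  crystallographic : ∀ α ∈ Φ, ∀ β ∈ Φ, ∃ n : ℤ, 2 * ⟪α, β⟫ = (n : ℝ)
  reflect_mem : ∀ α ∈ Φ, ∀ β ∈ Φ, α - (2 * ⟪α, β⟫) • β ∈ Φ
  reduced : ∀ α ∈ Φ, ∀ t : ℝ, t • α ∈ Φ → t = 1 ∨ t = -1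

/-- If `α ⊥ β` are orthogonal roots and `γ, δ ∈ Φ` satisfy `γ + δ = α`,
`(γ,β) = 1/2`, `(δ,β) = −1/2`, then the roots `δ, γ, β−γ` form a fundamental
system of a root subsystem of type `A₃`: in particular `β − γ ∈ Φ`,
`(δ,γ) = −1/2`, `(γ,β−γ) = −1/2`, and `(δ,β−γ) = 0`. -/
theorem fundamental_A3_of_pair {E : Type*} [NormedAddCommGroup E]
    [InnerProductSpace ℝ E] (S : SimplyLacedRootSystem E)
    {α β γ δ : E} (hα : α ∈ S.Φ) (hβ : β ∈ S.Φ) (hγ : γ ∈ S.Φ) (hδ : δ ∈ S.Φ)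
    (hperp : ⟪α, β⟫ = 0) (hsum : γ + δ = α)
    (hgb : ⟪γ, β⟫ = 1 / 2) (hdb : ⟪δ, β⟫ = -(1 / 2)) :
    β - γ ∈ S.Φ ∧ ⟪δ, γ⟫ = -(1 / 2) ∧ ⟪γ, β - γ⟫ = -(1 / 2) ∧
      ⟪δ, β - γ⟫ = 0 := by
  have hbg : ⟪β, γ⟫ = 1 / 2 := by rw [real_inner_comm]; exact hgb
  have hmem : β - γ ∈ S.Φ := by
    have := S.reflect_mem β hβ γ hγ
    rw [hbg] at this
    norm_num at this
    simpa using this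
  have hgg : ⟪γ, γ⟫ = 1 := S.norm_one γ hγ
  have hdg : ⟪δ, γ⟫ = -(1 / 2) := by
    have h : ⟪γ + δ, γ + δ⟫ = 1 := by rw [hsum]; exact S.norm_one α hα
    rw [inner_add_left, inner_add_right, inner_add_right, hgg, S.norm_one δ hδ,
      real_inner_comm γ δ] at h
    rw [show ⟪δ, γ⟫ = ⟪γ, δ⟫ from real_inner_comm γ δ]
    linarith
  refine ⟨hmem, hdg, ?_, ?_⟩
  · rw [inner_sub_right, hgg, real_inner_comm]; rw [hbg]; norm_num
  · rw [inner_sub_right, hdb, hdg]; ring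
end

section
/- Let Ω = {β_1,…,β_{−1}} be a maximal square in a simply-laced root system Φ with roots of length 1, and fix j. Define γ_j = β_j, γ_{−j} = −β_{−j}, and γ_i = β_j − β_i for i ≠ ±j. Then each γ_i is a root and Ω' = {γ_1,…,γ_{−1}} is again a maximal square: (γ_i,γ_{−i}) = 0 for all i and (γ_i,γ_t) = 1/2 for i ≠ ±t. -/
open scoped RealInnerProductSpace

/-- A maximal square in `Φ`: a family of roots `β_{±1},…,β_{±k}` (here indexed by
`Fin k × Bool`, the pair `(i, true)`/`(i, false)` playing the role of `β_{i}, β_{-i}`)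
with `(β_i, β_{-i}) = 0` and `(β_i, β_j) = 1/2` for `i ≠ ±j`. -/
def IsMaximalSquare {E : Type*} [NormedAddCommGroup E] [InnerProductSpace ℝ E]
    (Φ : Set E) (k : ℕ) (β : Fin k → Bool → E) : Prop :=
  (∀ i b, β i b ∈ Φ) ∧ (∀ i, ⟪β i true, β i false⟫ = 0) ∧
  (∀ i j, i ≠ j → ∀ b c, ⟪β i b, β j c⟫ = 1 / 2)

/-- Modifying a maximal square `{β_i}` by a fixed index `(j,s)` (playing the role
of the index `j` of the paper): setting `γ_j = β_j`, `γ_{-j} = -β_{-j}` and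
`γ_i = β_j - β_i` for `i ≠ ±j` yields roots forming again a maximal square. -/
theorem modified_maximalSquare {E : Type*} [NormedAddCommGroup E]
    [InnerProductSpace ℝ E] (S : SimplyLacedRootSystem E)
    (k : ℕ) (β : Fin k → Bool → E) (hβ : IsMaximalSquare S.Φ k β)
    (j : Fin k) (s : Bool) (γ : Fin k → Bool → E)
    (hγ : ∀ i b, γ i b =
      if i = j then (if b = s then β j b else -β j b) else β j s - β i b) :
    (∀ i b, γ i b ∈ S.Φ) ∧ IsMaximalSquare S.Φ k γ := by

  obtain ⟨hmem, horth, hhalf⟩ := hβ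
  have key : ∀ i b t c, ⟪β i b, β t c⟫ = if i = t then (if b = c then (1:ℝ) else 0) else 1/2 := by
    intro i b t c
    by_cases hit : i = t
    · subst hit
      by_cases hbc : b = c
      · subst hbc; simp [S.norm_one _ (hmem i b), -inner_self_eq_norm_sq_to_K]
      · cases b <;> cases c <;> simp_all [horth i, real_inner_comm]
    · simp [hit, hhalf i t hit b c]
  have hγmem : ∀ i b, γ i b ∈ S.Φ := by
    intro i b
    rw [hγ]
    by_cases hij : i = j
    · subst hij
      by_cases hbs : b = s
      · simp [hbs, hmem]
      · simp [hbs, S.neg_mem _ (hmem i b)]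
    · have h := S.reflect_mem (β j s) (hmem j s) (β i b) (hmem i b)
      have hji : j ≠ i := fun h' => hij h'.symm
      rw [hhalf j i hji s b] at h
      norm_num at h
      simpa [hij] using h
  refine ⟨hγmem, hγmem, ?_, ?_⟩
  · intro i
    rw [hγ, hγ]
    by_cases hij : i = j
    · subst hij
      cases s <;> simp [key, inner_neg_left, inner_neg_right]
    · have hji : ¬ j = i := fun h => hij h.symm
      simp [hij, hji, inner_sub_left, inner_sub_right, key, -inner_self_eq_norm_sq_to_K]
      ring
  · intro i t hit b c
    rw [hγ, hγ]
    have hti : t ≠ i := fun h => hit h.symm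
    by_cases hij : i = j
    · have htj : ¬ t = j := fun h => hit (hij.trans h.symm)
      have hjt : ¬ j = t := fun h => htj h.symm
      by_cases hbs : b = s <;>
        simp [hij, hbs, htj, hjt, inner_sub_right, inner_neg_left, key, -inner_self_eq_norm_sq_to_K] <;> ring
    · by_cases htj : t = j
      · have hji : ¬ j = i := fun h => hij h.symm
        by_cases hcs : c = s
        · simp [htj, hcs, hij, hji, hit, hti, inner_sub_left, inner_neg_right,
            inner_sub_right, key, real_inner_comm (β j s), -inner_self_eq_norm_sq_to_K]
          ring
        · have hsc : ¬ s = c := fun h => hcs h.symm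
          simp [htj, hcs, hsc, hij, hji, hit, hti, inner_sub_left, inner_neg_right,
            inner_sub_right, key, real_inner_comm (β j s)]
      · have hji : ¬ j = i := fun h => hij h.symm
        have hjt : ¬ j = t := fun h => htj h.symm
        simp [hij, htj, hji, hjt, hit, inner_sub_left, inner_sub_right, key, -inner_self_eq_norm_sq_to_K]
        ring
end

section
/- Let Φ be a simply-laced root system in Euclidean space E with roots of length 1, and let α, β, γ, δ ∈ Φ with α ⊥ β, γ ≠ α, δ ≠ α, and γ + δ = α + β. Then the structure constants of the corresponding simple complex Lie algebra satisfy N_{α,−γ} N_{β,−δ} = N_{α,−δ} N_{β,−γ}. -/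
open scoped RealInnerProductSpace

/-- The structure constants `N_{σ,τ}` of a Chevalley basis of the simple complex
Lie algebra with simply-laced root system `Φ`: `[e_σ, e_τ] = N_{σ,τ} e_{σ+τ}`
when `σ + τ ∈ Φ`. They satisfy the standard identities: they vanish unless
`σ + τ ∈ Φ`, are antisymmetric, equal `±1` on pairs summing to a root
(simply-laced case), are cyclically invariant on triples summing to `0`, and
satisfy the Jacobi identity on quadruples summing to `0`. -/
structure ChevalleyConstants {E : Type*} [NormedAddCommGroup E]
    [InnerProductSpace ℝ E] (S : SimplyLacedRootSystem E) where
  N : E → E → ℤ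
  eq_zero : ∀ α ∈ S.Φ, ∀ β ∈ S.Φ, α + β ∉ S.Φ → N α β = 0
  skew : ∀ α ∈ S.Φ, ∀ β ∈ S.Φ, N α β = -N β α
  abs_one : ∀ α ∈ S.Φ, ∀ β ∈ S.Φ, α + β ∈ S.Φ → N α β = 1 ∨ N α β = -1
  cycle : ∀ α ∈ S.Φ, ∀ β ∈ S.Φ, ∀ γ ∈ S.Φ, α + β + γ = 0 → N α β = N β γ
  jacobi : ∀ α ∈ S.Φ, ∀ β ∈ S.Φ, ∀ γ ∈ S.Φ, ∀ δ ∈ S.Φ, α + β + γ + δ = 0 →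
    α + β ≠ 0 → β + γ ≠ 0 → γ + α ≠ 0 →
    N α β * N γ δ + N β γ * N α δ + N γ α * N β δ = 0

/-- Vavilov's identity (C5): for roots `α ⊥ β` and `γ, δ ∈ Φ` with
`γ + δ = α + β`, `γ ≠ α`, `δ ≠ α`, the structure constants satisfy
`N_{α,−γ} N_{β,−δ} = N_{α,−δ} N_{β,−γ}`. -/
theorem structure_constants_C5 {E : Type*} [NormedAddCommGroup E]
    [InnerProductSpace ℝ E] (S : SimplyLacedRootSystem E)
    (Nc : ChevalleyConstants S)
    {α β γ δ : E} (hα : α ∈ S.Φ) (hβ : β ∈ S.Φ) (hγ : γ ∈ S.Φ) (hδ : δ ∈ S.Φ)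
    (hperp : ⟪α, β⟫ = 0) (hγα : γ ≠ α) (hδα : δ ≠ α) (hsum : γ + δ = α + β) :
    Nc.N α (-γ) * Nc.N β (-δ) = Nc.N α (-δ) * Nc.N β (-γ) := by
  have hnγ : -γ ∈ S.Φ := S.neg_mem γ hγ
  have hnδ : -δ ∈ S.Φ := S.neg_mem δ hδ
  -- α + β is not a root
  have hab : α + β ∉ S.Φ := by
    intro h
    have := S.norm_one _ h
    have hexp : ⟪α + β, α + β⟫ = ⟪α,α⟫ + ⟪α,β⟫ + (⟪β,α⟫ + ⟪β,β⟫) := by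
      simp only [inner_add_left, inner_add_right]; ring
    have hperp' : (⟪β, α⟫ : ℝ) = 0 := by rw [real_inner_comm]; exact hperp
    rw [hexp, S.norm_one α hα, S.norm_one β hβ, hperp, hperp'] at this
    norm_num at this
  have hba : Nc.N β α = 0 := by
    apply Nc.eq_zero β hβ α hα
    rwa [add_comm]
  have h1 : α + -γ ≠ 0 := by
    intro h
    rw [← sub_eq_add_neg, sub_eq_zero] at h
    exact hγα h.symm
  have h2 : -γ + β ≠ 0 := by
    intro h
    rw [neg_add_eq_zero] at h
    apply hδα
    rw [← h, add_comm α γ] at hsum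
    exact add_left_cancel hsum
  have h3 : β + α ≠ 0 := by
    intro h
    have hβα : β = -α := by rw [add_eq_zero_iff_eq_neg] at h; exact h
    rw [hβα, inner_neg_right, S.norm_one α hα] at hperp
    norm_num at hperp
  have hsum0 : α + -γ + β + -δ = 0 := by
    have h' : α + β - (γ + δ) = 0 := by rw [hsum]; abel
    rw [← h']; abel
  have hj := Nc.jacobi α hα (-γ) hnγ β hβ (-δ) hnδ hsum0 h1 h2 h3
  have hskew : Nc.N (-γ) β = -Nc.N β (-γ) := Nc.skew (-γ) hnγ β hβ
  rw [hba, hskew] at hj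
  linarith [hj]
end

section
/- Let Φ be a simply-laced root system with roots of length 1, α ⊥ β orthogonal roots, and γ,δ ∈ Φ with γ+δ = α, (γ,β) = 1/2, (δ,β) = −1/2. Then γ' = δ+β and δ' = γ−β are roots, γ'+δ' = α, (γ',β) ≠ 0, and the four roots γ,δ,γ',δ' all lie in the A₃ subsystem spanned by δ, γ, β−γ; moreover {γ',δ'} is the unique pair in S_{2π/3}(α,β) other than {γ,δ} contained in this subsystem. -/
open scoped RealInnerProductSpace

private lemma eq_of_inner_span {E : Type*} [NormedAddCommGroup E]
    [InnerProductSpace ℝ E] {a b c x y : E}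
    (hx : x ∈ Submodule.span ℝ ({a, b, c} : Set E))
    (hy : y ∈ Submodule.span ℝ ({a, b, c} : Set E))
    (ha : ⟪x - y, a⟫ = 0) (hb : ⟪x - y, b⟫ = 0) (hc : ⟪x - y, c⟫ = 0) :
    x = y := by
  have hz : x - y ∈ Submodule.span ℝ ({a, b, c} : Set E) := Submodule.sub_mem _ hx hy
  have key : ∀ t ∈ Submodule.span ℝ ({a, b, c} : Set E), ⟪x - y, t⟫ = 0 := by
    intro t ht
    induction ht using Submodule.span_induction with
    | mem t ht =>
      simp only [Set.mem_insert_iff, Set.mem_singleton_iff] at ht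
      rcases ht with rfl | rfl | rfl <;> assumption
    | zero => simp
    | add u v _ _ hu hv => rw [inner_add_right, hu, hv]; ring
    | smul r u _ hu => rw [real_inner_smul_right, hu]; ring
  have h0 : ⟪x - y, x - y⟫ = 0 := key _ hz
  rw [inner_self_eq_zero, sub_eq_zero] at h0
  exact h0

set_option maxHeartbeats 1000000 in
/-- For orthogonal roots `α ⊥ β` and a pair `γ, δ ∈ Φ` with `γ + δ = α`,
`(γ,β) = 1/2`, `(δ,β) = −1/2`: the conjugate pair `γ' = δ + β`, `δ' = γ − β`
consists of roots, sums to `α`, has `(γ',β) ≠ 0`, all four roots lie in the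
`A₃` subsystem spanned by `δ, γ, β − γ`, and `{γ',δ'}` is the unique pair of
`S_{2π/3}(α,β)` other than `{γ,δ}` contained in this subsystem. -/
theorem conjugate_pair_in_A3 {E : Type*} [NormedAddCommGroup E]
    [InnerProductSpace ℝ E] (S : SimplyLacedRootSystem E)
    {α β γ δ : E} (hα : α ∈ S.Φ) (hβ : β ∈ S.Φ) (hγ : γ ∈ S.Φ) (hδ : δ ∈ S.Φ)
    (hperp : ⟪α, β⟫ = 0) (hsum : γ + δ = α)
    (hgb : ⟪γ, β⟫ = 1 / 2) (hdb : ⟪δ, β⟫ = -(1 / 2)) :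
    δ + β ∈ S.Φ ∧ γ - β ∈ S.Φ ∧ (δ + β) + (γ - β) = α ∧ ⟪δ + β, β⟫ ≠ 0 ∧
    (∀ x ∈ ({γ, δ, δ + β, γ - β} : Set E),
      x ∈ (Submodule.span ℝ ({δ, γ, β - γ} : Set E) : Submodule ℝ E)) ∧
    (∀ γ'' ∈ S.Φ, ∀ δ'' ∈ S.Φ, γ'' + δ'' = α → ⟪γ'', β⟫ ≠ 0 →
      γ'' ∈ (Submodule.span ℝ ({δ, γ, β - γ} : Set E) : Submodule ℝ E) →
      δ'' ∈ (Submodule.span ℝ ({δ, γ, β - γ} : Set E) : Submodule ℝ E) →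
      ({γ'', δ''} : Set E) = {γ, δ} ∨ ({γ'', δ''} : Set E) = {δ + β, γ - β}) := by
  have hββ : ⟪β, β⟫ = 1 := S.norm_one β hβ
  have hγγ : ⟪γ, γ⟫ = 1 := S.norm_one γ hγ
  have hδδ : ⟪δ, δ⟫ = 1 := S.norm_one δ hδ
  have hαα : ⟪α, α⟫ = 1 := S.norm_one α hα
  have hβγ : ⟪β, γ⟫ = 1 / 2 := by rw [real_inner_comm]; exact hgb
  have hβδ : ⟪β, δ⟫ = -(1 / 2) := by rw [real_inner_comm]; exact hdb
  have hγδ : ⟪γ, δ⟫ = -(1 / 2) := by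
    have h1 : ⟪γ + δ, γ + δ⟫ = 1 := by rw [hsum]; exact hαα
    simp only [inner_add_left, inner_add_right] at h1
    have h2 := real_inner_comm γ δ
    linarith
  have hδγ : ⟪δ, γ⟫ = -(1 / 2) := by rw [real_inner_comm]; exact hγδ
  -- memberships of the conjugate roots
  have hδβ_mem : δ + β ∈ S.Φ := by
    have h := S.reflect_mem δ hδ β hβ
    have he : δ - (2 * ⟪δ, β⟫) • β = δ + β := by rw [hdb]; module
    rwa [he] at h
  have hγβ_mem : γ - β ∈ S.Φ := by
    have h := S.reflect_mem γ hγ β hβ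
    have he : γ - (2 * ⟪γ, β⟫) • β = γ - β := by rw [hgb]; module
    rwa [he] at h
  have hβγ_mem : β - γ ∈ S.Φ := by
    have h := S.reflect_mem β hβ γ hγ
    have he : β - (2 * ⟪β, γ⟫) • γ = β - γ := by rw [hβγ]; module
    rwa [he] at h
  -- span memberships
  have hδV : δ ∈ Submodule.span ℝ ({δ, γ, β - γ} : Set E) :=
    Submodule.subset_span (by simp)
  have hγV : γ ∈ Submodule.span ℝ ({δ, γ, β - γ} : Set E) :=
    Submodule.subset_span (by simp)
  have hbgV : β - γ ∈ Submodule.span ℝ ({δ, γ, β - γ} : Set E) :=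
    Submodule.subset_span (by simp)
  have hδβV : δ + β ∈ Submodule.span ℝ ({δ, γ, β - γ} : Set E) := by
    have he : δ + β = δ + (γ + (β - γ)) := by abel
    rw [he]; exact Submodule.add_mem _ hδV (Submodule.add_mem _ hγV hbgV)
  have hγmβV : γ - β ∈ Submodule.span ℝ ({δ, γ, β - γ} : Set E) := by
    have he : γ - β = -(β - γ) := by abel
    rw [he]; exact Submodule.neg_mem _ hbgV
  refine ⟨hδβ_mem, hγβ_mem, by rw [← hsum]; abel, ?_, ?_, ?_⟩
  · rw [inner_add_left, hdb, hββ]; norm_num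
  · intro x hx
    simp only [Set.mem_insert_iff, Set.mem_singleton_iff] at hx
    rcases hx with rfl | rfl | rfl | rfl
    exacts [hγV, hδV, hδβV, hγmβV]
  · intro γ'' hγ'' δ'' hδ'' hsum'' hne'' hγ''V hδ''V
    have hδ''eq : δ'' = α - γ'' := by rw [← hsum'']; abel
    have hgg : ⟪γ'', γ''⟫ = 1 := S.norm_one _ hγ''
    have hdd : ⟪δ'', δ''⟫ = 1 := S.norm_one _ hδ''
    -- P + Q = 1/2
    have hPQ : ⟪γ'', δ⟫ + ⟪γ'', γ⟫ = 1 / 2 := by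
      have hdd' : ⟪α - γ'', α - γ''⟫ = 1 := by rw [← hδ''eq]; exact hdd
      simp only [inner_sub_left, inner_sub_right] at hdd'
      have hcomm := real_inner_comm α γ''
      have hsplit : ⟪γ'', α⟫ = ⟪γ'', γ⟫ + ⟪γ'', δ⟫ := by
        rw [← hsum, inner_add_right]
      linarith
    -- integrality
    obtain ⟨m, hm⟩ := S.crystallographic γ'' hγ'' δ hδ
    obtain ⟨k, hk⟩ := S.crystallographic γ'' hγ'' β hβ
    -- Gram-matrix identity: γ'' equals its expansion in the A₃ basis
    have hw : γ'' = ((3 * ⟪γ'', δ⟫ + ⟪γ'', γ⟫ + ⟪γ'', β⟫) / 2) • δ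
        + (⟪γ'', δ⟫ + ⟪γ'', γ⟫ + ⟪γ'', β⟫) • γ
        + ((⟪γ'', δ⟫ - ⟪γ'', γ⟫ + 3 * ⟪γ'', β⟫) / 2) • (β - γ) := by
      refine eq_of_inner_span hγ''V ?_ ?_ ?_ ?_
      · exact Submodule.add_mem _ (Submodule.add_mem _
          (Submodule.smul_mem _ _ hδV) (Submodule.smul_mem _ _ hγV))
          (Submodule.smul_mem _ _ hbgV)
      · simp only [inner_sub_left, inner_sub_right, inner_add_left,
          real_inner_smul_left, hδδ, hγγ, hββ, hγδ, hδγ, hgb, hdb, hβγ, hβδ]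
        ring
      · simp only [inner_sub_left, inner_sub_right, inner_add_left,
          real_inner_smul_left, hδδ, hγγ, hββ, hγδ, hδγ, hgb, hdb, hβγ, hβδ]
        ring
      · simp only [inner_sub_left, inner_sub_right, inner_add_left,
          real_inner_smul_left, hδδ, hγγ, hββ, hγδ, hδγ, hgb, hdb, hβγ, hβδ]
        ring
    have hgg2 : ⟪γ'', ((3 * ⟪γ'', δ⟫ + ⟪γ'', γ⟫ + ⟪γ'', β⟫) / 2) • δ
        + (⟪γ'', δ⟫ + ⟪γ'', γ⟫ + ⟪γ'', β⟫) • γ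
        + ((⟪γ'', δ⟫ - ⟪γ'', γ⟫ + 3 * ⟪γ'', β⟫) / 2) • (β - γ)⟫ = 1 := by
      rw [← hw]; exact hgg
    simp only [inner_add_right, inner_sub_right, real_inner_smul_right] at hgg2
    -- the integer equation
    have hreal : 4 * (m : ℝ) ^ 2 + 3 * (k : ℝ) ^ 2 + 4 * m * k - 4 * m - 2 * k = 5 := by
      rw [show ((m : ℝ)) = 2 * ⟪γ'', δ⟫ from hm.symm,
          show ((k : ℝ)) = 2 * ⟪γ'', β⟫ from hk.symm]
      linear_combination (8 : ℝ) * hgg2 +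
        (4 * ⟪γ'', δ⟫ - 12 * ⟪γ'', γ⟫ + 8 * ⟪γ'', β⟫ - 6) * hPQ
    have hint : 4 * m ^ 2 + 3 * k ^ 2 + 4 * m * k - 4 * m - 2 * k = 5 := by
      exact_mod_cast hreal
    have h1 : (2 * m + k - 1) ^ 2 + 2 * k ^ 2 = 6 := by linear_combination hint
    have hk2 : -1 ≤ k := by nlinarith [sq_nonneg (2 * m + k - 1), sq_nonneg (k + 2)]
    have hk1 : k ≤ 1 := by nlinarith [sq_nonneg (2 * m + k - 1), sq_nonneg (k - 2)]
    have hm1 : m ≤ 2 := by nlinarith [sq_nonneg (2 * m + k - 5)]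
    have hm2 : -1 ≤ m := by nlinarith [sq_nonneg (2 * m + k + 3)]
    have hint' : 4 * m * m + 3 * k * k + 4 * m * k - 4 * m - 2 * k = 5 := by
      linear_combination hint
    have hcases : (m = -1 ∧ k = 1) ∨ (m = 2 ∧ k = -1) ∨ (m = 1 ∧ k = 1)
        ∨ (m = 0 ∧ k = -1) := by
      interval_cases m <;> interval_cases k <;> omega
    clear hw hgg2 hgg hdd hreal hint h1 hint' hm1 hm2 hk1 hk2 hδ''V hne'' hsum''
    rcases hcases with ⟨rfl, rfl⟩ | ⟨rfl, rfl⟩ | ⟨rfl, rfl⟩ | ⟨rfl, rfl⟩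
    · -- γ'' = γ
      push_cast at hm hk
      have hP : ⟪γ'', δ⟫ = -(1 / 2) := by linarith
      have hB : ⟪γ'', β⟫ = 1 / 2 := by linarith
      have hQ : ⟪γ'', γ⟫ = 1 := by linarith
      have hgeq : γ'' = γ := by
        refine eq_of_inner_span hγ''V hγV ?_ ?_ ?_ <;>
          simp only [inner_sub_left, inner_sub_right, hP, hQ, hB, hδδ, hγγ, hββ,
            hγδ, hδγ, hgb, hdb, hβγ, hβδ] <;> ring
      have hdeq : δ'' = δ := by rw [hδ''eq, hgeq, ← hsum]; abel
      left; rw [hgeq, hdeq]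
    · -- γ'' = δ
      push_cast at hm hk
      have hP : ⟪γ'', δ⟫ = 1 := by linarith
      have hB : ⟪γ'', β⟫ = -(1 / 2) := by linarith
      have hQ : ⟪γ'', γ⟫ = -(1 / 2) := by linarith
      have hgeq : γ'' = δ := by
        refine eq_of_inner_span hγ''V hδV ?_ ?_ ?_ <;>
          simp only [inner_sub_left, inner_sub_right, hP, hQ, hB, hδδ, hγγ, hββ,
            hγδ, hδγ, hgb, hdb, hβγ, hβδ] <;> ring
      have hdeq : δ'' = γ := by rw [hδ''eq, hgeq, ← hsum]; abel
      left; rw [hgeq, hdeq]; exact Set.pair_comm δ γ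
    · -- γ'' = δ + β
      push_cast at hm hk
      have hP : ⟪γ'', δ⟫ = 1 / 2 := by linarith
      have hB : ⟪γ'', β⟫ = 1 / 2 := by linarith
      have hQ : ⟪γ'', γ⟫ = 0 := by linarith
      have hgeq : γ'' = δ + β := by
        refine eq_of_inner_span hγ''V hδβV ?_ ?_ ?_ <;>
          simp only [inner_sub_left, inner_sub_right, inner_add_left, hP, hQ, hB,
            hδδ, hγγ, hββ, hγδ, hδγ, hgb, hdb, hβγ, hβδ] <;> ring
      have hdeq : δ'' = γ - β := by rw [hδ''eq, hgeq, ← hsum]; abel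
      right; rw [hgeq, hdeq]
    · -- γ'' = γ - β
      push_cast at hm hk
      have hP : ⟪γ'', δ⟫ = 0 := by linarith
      have hB : ⟪γ'', β⟫ = -(1 / 2) := by linarith
      have hQ : ⟪γ'', γ⟫ = 1 / 2 := by linarith
      have hgeq : γ'' = γ - β := by
        refine eq_of_inner_span hγ''V hγmβV ?_ ?_ ?_ <;>
          simp only [inner_sub_left, inner_sub_right, hP, hQ, hB, hδδ, hγγ, hββ,
            hγδ, hδγ, hgb, hdb, hβγ, hβδ] <;> ring
      have hdeq : δ'' = δ + β := by rw [hδ''eq, hgeq, ← hsum]; abel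
      right; rw [hgeq, hdeq]; exact Set.pair_comm (γ - β) (δ + β)
end
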